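/- arXiv:2505.13850 — 2 statements merged into one kernel-verified Lean document; each statement's English description precedes it below -/
import Mathlib

section
/- For every cubical ω-set Q there exists a free self-dual reflective cubical ω-magma M(Q) over Q, constructed by freely adjoining identity cells, duals, and formal compositions level by level; the structural map η : Q → U(M(Q)) is injective and satisfies the universal factorization property. -/
namespace Cub

/-- commutation of two erasures of a finite set of directions -/
theorem ec (D : Finset ℕ) (d e : ℕ) : (D.erase d).erase e = (D.erase e).erase d :=
  Finset.erase_right_comm

/-- A cubical ω-set: a family of sets of `n`-cells indexed by the finite set `D ⊂ ℕ`
of directions (with `n = D.card`), together with source and target maps in each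
direction, satisfying the cubical axioms. -/
structure OmegaSet where
  Q : Finset ℕ → Type
  s : ∀ (D : Finset ℕ) (d : ℕ), d ∈ D → Q D → Q (D.erase d)
  t : ∀ (D : Finset ℕ) (d : ℕ), d ∈ D → Q D → Q (D.erase d)
  ss : ∀ (D : Finset ℕ) (d e : ℕ) (hd : d ∈ D) (he : e ∈ D) (hed : e ≠ d) (x : Q D),
    s (D.erase d) e (Finset.mem_erase_of_ne_of_mem hed he) (s D d hd x)
      = cast (congrArg Q (ec D e d))
          (s (D.erase e) d (Finset.mem_erase_of_ne_of_mem (Ne.symm hed) hd) (s D e he x))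
  tt : ∀ (D : Finset ℕ) (d e : ℕ) (hd : d ∈ D) (he : e ∈ D) (hed : e ≠ d) (x : Q D),
    t (D.erase d) e (Finset.mem_erase_of_ne_of_mem hed he) (t D d hd x)
      = cast (congrArg Q (ec D e d))
          (t (D.erase e) d (Finset.mem_erase_of_ne_of_mem (Ne.symm hed) hd) (t D e he x))
  st : ∀ (D : Finset ℕ) (d e : ℕ) (hd : d ∈ D) (he : e ∈ D) (hed : e ≠ d) (x : Q D),
    s (D.erase d) e (Finset.mem_erase_of_ne_of_mem hed he) (t D d hd x)
      = cast (congrArg Q (ec D e d))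
          (t (D.erase e) d (Finset.mem_erase_of_ne_of_mem (Ne.symm hed) hd) (s D e he x))
  ts : ∀ (D : Finset ℕ) (d e : ℕ) (hd : d ∈ D) (he : e ∈ D) (hed : e ≠ d) (x : Q D),
    t (D.erase d) e (Finset.mem_erase_of_ne_of_mem hed he) (s D d hd x)
      = cast (congrArg Q (ec D e d))
          (s (D.erase e) d (Finset.mem_erase_of_ne_of_mem (Ne.symm hed) hd) (t D e he x))

end Cub

namespace Cub

/-- A morphism of cubical ω-sets: a dimension/direction preserving family of maps
commuting with all source and target maps. -/
def IsHom (A B : OmegaSet) (f : ∀ D : Finset ℕ, A.Q D → B.Q D) : Prop :=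
  (∀ (D : Finset ℕ) (d : ℕ) (hd : d ∈ D) (x : A.Q D),
      B.s D d hd (f D x) = f (D.erase d) (A.s D d hd x)) ∧
  (∀ (D : Finset ℕ) (d : ℕ) (hd : d ∈ D) (x : A.Q D),
      B.t D d hd (f D x) = f (D.erase d) (A.t D d hd x))

end Cub

namespace Cub

/-- A self-dual reflective cubical ω-magma: a cubical ω-set equipped with binary
compositions, nullary reflectors and unary self-dualities in every direction,
satisfying the structural (source/target) axioms. -/
structure SDRMagma extends OmegaSet where
  comp : ∀ (D : Finset ℕ) (d : ℕ) (hd : d ∈ D) (x y : Q D),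
    s D d hd x = t D d hd y → Q D
  s_comp : ∀ (D : Finset ℕ) (d : ℕ) (hd : d ∈ D) (x y : Q D)
      (h : s D d hd x = t D d hd y),
    s D d hd (comp D d hd x y h) = s D d hd y
  t_comp : ∀ (D : Finset ℕ) (d : ℕ) (hd : d ∈ D) (x y : Q D)
      (h : s D d hd x = t D d hd y),
    t D d hd (comp D d hd x y h) = t D d hd x
  s_comp_ne : ∀ (D : Finset ℕ) (d e : ℕ) (hd : d ∈ D) (he : e ∈ D) (hed : e ≠ d)
      (x y : Q D) (h : s D d hd x = t D d hd y)
      (h' : s (D.erase e) d (Finset.mem_erase_of_ne_of_mem (Ne.symm hed) hd) (s D e he x)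
          = t (D.erase e) d (Finset.mem_erase_of_ne_of_mem (Ne.symm hed) hd) (s D e he y)),
    s D e he (comp D d hd x y h)
      = comp (D.erase e) d (Finset.mem_erase_of_ne_of_mem (Ne.symm hed) hd)
          (s D e he x) (s D e he y) h'
  t_comp_ne : ∀ (D : Finset ℕ) (d e : ℕ) (hd : d ∈ D) (he : e ∈ D) (hed : e ≠ d)
      (x y : Q D) (h : s D d hd x = t D d hd y)
      (h' : s (D.erase e) d (Finset.mem_erase_of_ne_of_mem (Ne.symm hed) hd) (t D e he x)
          = t (D.erase e) d (Finset.mem_erase_of_ne_of_mem (Ne.symm hed) hd) (t D e he y)),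
    t D e he (comp D d hd x y h)
      = comp (D.erase e) d (Finset.mem_erase_of_ne_of_mem (Ne.symm hed) hd)
          (t D e he x) (t D e he y) h'
  iota : ∀ (D : Finset ℕ) (d : ℕ), d ∈ D → Q (D.erase d) → Q D
  s_iota : ∀ (D : Finset ℕ) (d : ℕ) (hd : d ∈ D) (x : Q (D.erase d)),
    s D d hd (iota D d hd x) = x
  t_iota : ∀ (D : Finset ℕ) (d : ℕ) (hd : d ∈ D) (x : Q (D.erase d)),
    t D d hd (iota D d hd x) = x
  s_iota_ne : ∀ (D : Finset ℕ) (d e : ℕ) (hd : d ∈ D) (he : e ∈ D) (hed : e ≠ d)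
      (x : Q (D.erase d)),
    s D e he (iota D d hd x)
      = iota (D.erase e) d (Finset.mem_erase_of_ne_of_mem (Ne.symm hed) hd)
          (cast (congrArg Q (ec D d e))
            (s (D.erase d) e (Finset.mem_erase_of_ne_of_mem hed he) x))
  t_iota_ne : ∀ (D : Finset ℕ) (d e : ℕ) (hd : d ∈ D) (he : e ∈ D) (hed : e ≠ d)
      (x : Q (D.erase d)),
    t D e he (iota D d hd x)
      = iota (D.erase e) d (Finset.mem_erase_of_ne_of_mem (Ne.symm hed) hd)
          (cast (congrArg Q (ec D d e))
            (t (D.erase d) e (Finset.mem_erase_of_ne_of_mem hed he) x))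
  star : ∀ (D : Finset ℕ) (d : ℕ), d ∈ D → Q D → Q D
  s_star : ∀ (D : Finset ℕ) (d : ℕ) (hd : d ∈ D) (x : Q D),
    s D d hd (star D d hd x) = t D d hd x
  t_star : ∀ (D : Finset ℕ) (d : ℕ) (hd : d ∈ D) (x : Q D),
    t D d hd (star D d hd x) = s D d hd x
  s_star_ne : ∀ (D : Finset ℕ) (d e : ℕ) (hd : d ∈ D) (he : e ∈ D) (hed : e ≠ d) (x : Q D),
    s D e he (star D d hd x)
      = star (D.erase e) d (Finset.mem_erase_of_ne_of_mem (Ne.symm hed) hd) (s D e he x)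
  t_star_ne : ∀ (D : Finset ℕ) (d e : ℕ) (hd : d ∈ D) (he : e ∈ D) (hed : e ≠ d) (x : Q D),
    t D e he (star D d hd x)
      = star (D.erase e) d (Finset.mem_erase_of_ne_of_mem (Ne.symm hed) hd) (t D e he x)

/-- A morphism of self-dual reflective cubical ω-magmas: commutes with sources,
targets, compositions, reflectors and self-dualities. -/
def IsSDRHom (A B : SDRMagma) (f : ∀ D : Finset ℕ, A.Q D → B.Q D) : Prop :=
  (∀ (D : Finset ℕ) (d : ℕ) (hd : d ∈ D) (x : A.Q D),
      B.s D d hd (f D x) = f (D.erase d) (A.s D d hd x)) ∧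
  (∀ (D : Finset ℕ) (d : ℕ) (hd : d ∈ D) (x : A.Q D),
      B.t D d hd (f D x) = f (D.erase d) (A.t D d hd x)) ∧
  (∀ (D : Finset ℕ) (d : ℕ) (hd : d ∈ D) (x y : A.Q D)
      (h : A.s D d hd x = A.t D d hd y)
      (h' : B.s D d hd (f D x) = B.t D d hd (f D y)),
    f D (A.comp D d hd x y h) = B.comp D d hd (f D x) (f D y) h') ∧
  (∀ (D : Finset ℕ) (d : ℕ) (hd : d ∈ D) (x : A.Q (D.erase d)),
    f D (A.iota D d hd x) = B.iota D d hd (f (D.erase d) x)) ∧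
  (∀ (D : Finset ℕ) (d : ℕ) (hd : d ∈ D) (x : A.Q D),
    f D (A.star D d hd x) = B.star D d hd (f D x))

/-- A congruence in a self-dual reflective cubical ω-magma: a family of equivalence
relations forming a cubical ω-subset of the product `M × M` closed under all the
(componentwise) operations. -/
def IsCongruence (M : SDRMagma) (R : ∀ D : Finset ℕ, M.Q D → M.Q D → Prop) : Prop :=
  (∀ D : Finset ℕ, Equivalence (R D)) ∧
  (∀ (D : Finset ℕ) (d : ℕ) (hd : d ∈ D) (x y : M.Q D),
    R D x y → R (D.erase d) (M.s D d hd x) (M.s D d hd y)) ∧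
  (∀ (D : Finset ℕ) (d : ℕ) (hd : d ∈ D) (x y : M.Q D),
    R D x y → R (D.erase d) (M.t D d hd x) (M.t D d hd y)) ∧
  (∀ (D : Finset ℕ) (d : ℕ) (hd : d ∈ D) (x y x' y' : M.Q D)
      (h : M.s D d hd x = M.t D d hd y) (h' : M.s D d hd x' = M.t D d hd y'),
    R D x x' → R D y y' → R D (M.comp D d hd x y h) (M.comp D d hd x' y' h')) ∧
  (∀ (D : Finset ℕ) (d : ℕ) (hd : d ∈ D) (x y : M.Q (D.erase d)),
    R (D.erase d) x y → R D (M.iota D d hd x) (M.iota D d hd y)) ∧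
  (∀ (D : Finset ℕ) (d : ℕ) (hd : d ∈ D) (x y : M.Q D),
    R D x y → R D (M.star D d hd x) (M.star D d hd y))

end Cub

namespace Cub

/-- `η : Q → U(M)` exhibits `M` as the free self-dual reflective cubical ω-magma
over the cubical ω-set `Q`: `η` is a morphism of cubical ω-sets and every cubical
ω-set morphism from `Q` into the underlying ω-set of a self-dual reflective cubical
ω-magma factors uniquely through `η` via a morphism of such magmas. -/
def IsFreeSDR (Q : OmegaSet) (M : SDRMagma) (η : ∀ D : Finset ℕ, Q.Q D → M.Q D) : Prop :=
  IsHom Q M.toOmegaSet η ∧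
  ∀ (M' : SDRMagma) (φ : ∀ D : Finset ℕ, Q.Q D → M'.Q D),
    IsHom Q M'.toOmegaSet φ →
    ∃! ψ : ∀ D : Finset ℕ, M.Q D → M'.Q D,
      IsSDRHom M M' ψ ∧ ∀ (D : Finset ℕ) (x : Q.Q D), ψ D (η D x) = φ D x

end Cub


namespace Cub

/-- generic (source/target) face map, `false` = source, `true` = target -/
def Qface (A : OmegaSet) (b : Bool) (D : Finset ℕ) (d : ℕ) (hd : d ∈ D) (x : A.Q D) :
    A.Q (D.erase d) := bif b then A.t D d hd x else A.s D d hd x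

theorem Qface_comm (A : OmegaSet) (b₁ b₂ : Bool) (D : Finset ℕ) (d e : ℕ)
    (hd : d ∈ D) (he : e ∈ D) (hed : e ≠ d) (x : A.Q D) :
    HEq (Qface A b₂ (D.erase d) e (Finset.mem_erase_of_ne_of_mem hed he) (Qface A b₁ D d hd x))
        (Qface A b₁ (D.erase e) d (Finset.mem_erase_of_ne_of_mem (Ne.symm hed) hd)
          (Qface A b₂ D e he x)) := by
  cases b₁ <;> cases b₂ <;> simp only [Qface, cond_false, cond_true]
  · rw [A.ss D d e hd he hed x]; exact cast_heq _ _
  · rw [A.ts D d e hd he hed x]; exact cast_heq _ _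
  · rw [A.st D d e hd he hed x]; exact cast_heq _ _
  · rw [A.tt D d e hd he hed x]; exact cast_heq _ _

theorem sdtd (A : OmegaSet) (D : Finset ℕ) (d e : ℕ) (hd : d ∈ D) (he : e ∈ D) (hed : e ≠ d)
    (x y : A.Q D) (h : A.s D d hd x = A.t D d hd y) (b : Bool) :
    A.s (D.erase e) d (Finset.mem_erase_of_ne_of_mem (Ne.symm hed) hd) (Qface A b D e he x)
      = A.t (D.erase e) d (Finset.mem_erase_of_ne_of_mem (Ne.symm hed) hd) (Qface A b D e he y) := by
  have h1 := congrArg (Qface A b (D.erase d) e (Finset.mem_erase_of_ne_of_mem hed he)) h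
  have h2 := Qface_comm A false b D d e hd he hed x
  have h3 := Qface_comm A true b D d e hd he hed y
  exact eq_of_heq ((h2.symm.trans (heq_of_eq h1)).trans h3)

/-- raw terms of the free self-dual reflective cubical ω-magma -/
inductive T (A : OmegaSet) : Finset ℕ → Type
  | gen (D : Finset ℕ) (q : A.Q D) : T A D
  | comp (D : Finset ℕ) (d : ℕ) (hd : d ∈ D) (x y : T A D) : T A D
  | iota (D : Finset ℕ) (d : ℕ) (hd : d ∈ D) (x : T A (D.erase d)) : T A D
  | star (D : Finset ℕ) (d : ℕ) (hd : d ∈ D) (x : T A D) : T A D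

variable {A : OmegaSet}

theorem gen_heq {D₁ D₂ : Finset ℕ} (h : D₁ = D₂) {q₁ : A.Q D₁} {q₂ : A.Q D₂}
    (hq : HEq q₁ q₂) : HEq (T.gen D₁ q₁) (T.gen D₂ q₂) := by subst h; cases hq; rfl

theorem comp_heq {D₁ D₂ : Finset ℕ} (h : D₁ = D₂) {d : ℕ} (hd₁ : d ∈ D₁) (hd₂ : d ∈ D₂)
    {x₁ y₁ : T A D₁} {x₂ y₂ : T A D₂} (hx : HEq x₁ x₂) (hy : HEq y₁ y₂) :
    HEq (T.comp D₁ d hd₁ x₁ y₁) (T.comp D₂ d hd₂ x₂ y₂) := by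
  subst h; cases hx; cases hy; rfl

theorem iota_heq {D₁ D₂ : Finset ℕ} (h : D₁ = D₂) {d : ℕ} (hd₁ : d ∈ D₁) (hd₂ : d ∈ D₂)
    {x₁ : T A (D₁.erase d)} {x₂ : T A (D₂.erase d)} (hx : HEq x₁ x₂) :
    HEq (T.iota D₁ d hd₁ x₁) (T.iota D₂ d hd₂ x₂) := by subst h; cases hx; rfl

theorem star_heq {D₁ D₂ : Finset ℕ} (h : D₁ = D₂) {d : ℕ} (hd₁ : d ∈ D₁) (hd₂ : d ∈ D₂)
    {x₁ : T A D₁} {x₂ : T A D₂} (hx : HEq x₁ x₂) :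
    HEq (T.star D₁ d hd₁ x₁) (T.star D₂ d hd₂ x₂) := by subst h; cases hx; rfl

/-- faces of raw terms -/
def face : ∀ {D : Finset ℕ}, T A D → Bool → ∀ (d : ℕ), d ∈ D → T A (D.erase d)
  | _, .gen D q, b, d, hd => .gen _ (Qface A b D d hd q)
  | _, .comp D d' hd' x y, b, d, hd =>
      if h : d' = d then (bif b then face x b d hd else face y b d hd)
      else .comp (D.erase d) d' (Finset.mem_erase_of_ne_of_mem h hd') (face x b d hd)
        (face y b d hd)
  | _, .iota D d' hd' x, b, d, hd =>
      if h : d' = d then cast (congrArg (T A) (congrArg D.erase h)) x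
      else .iota (D.erase d) d' (Finset.mem_erase_of_ne_of_mem h hd')
        (cast (congrArg (T A) (ec D d' d))
          (face x b d (Finset.mem_erase_of_ne_of_mem (fun hh => h hh.symm) hd)))
  | _, .star D d' hd' x, b, d, hd =>
      if h : d' = d then face x (!b) d hd
      else .star (D.erase d) d' (Finset.mem_erase_of_ne_of_mem h hd') (face x b d hd)

theorem face_gen {D : Finset ℕ} (q : A.Q D) (b : Bool) (d : ℕ) (hd : d ∈ D) :
    face (T.gen D q) b d hd = .gen _ (Qface A b D d hd q) := by simp [face]

theorem face_comp_same {D : Finset ℕ} (d : ℕ) (hd' hd : d ∈ D) (x y : T A D) (b : Bool) :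
    face (T.comp D d hd' x y) b d hd = (bif b then face x b d hd else face y b d hd) := by
  simp [face]

theorem face_comp_ne {D : Finset ℕ} {d' d : ℕ} (h : ¬ d' = d) (hd' : d' ∈ D) (hd : d ∈ D)
    (x y : T A D) (b : Bool) :
    face (T.comp D d' hd' x y) b d hd
      = .comp (D.erase d) d' (Finset.mem_erase_of_ne_of_mem h hd') (face x b d hd)
          (face y b d hd) := by
  simp [face, h]

theorem face_iota_same {D : Finset ℕ} (d : ℕ) (hd' hd : d ∈ D) (x : T A (D.erase d)) (b : Bool) :
    face (T.iota D d hd' x) b d hd = x := by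
  simp only [face, dif_pos]
  exact eq_of_heq (cast_heq _ _)

theorem face_iota_ne {D : Finset ℕ} {d' d : ℕ} (h : ¬ d' = d) (hd' : d' ∈ D) (hd : d ∈ D)
    (x : T A (D.erase d')) (b : Bool) :
    face (T.iota D d' hd' x) b d hd
      = .iota (D.erase d) d' (Finset.mem_erase_of_ne_of_mem h hd')
          (cast (congrArg (T A) (ec D d' d))
            (face x b d (Finset.mem_erase_of_ne_of_mem (fun hh => h hh.symm) hd))) := by
  simp [face, h]

theorem face_star_same {D : Finset ℕ} (d : ℕ) (hd' hd : d ∈ D) (x : T A D) (b : Bool) :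
    face (T.star D d hd' x) b d hd = face x (!b) d hd := by simp [face]

theorem face_star_ne {D : Finset ℕ} {d' d : ℕ} (h : ¬ d' = d) (hd' : d' ∈ D) (hd : d ∈ D)
    (x : T A D) (b : Bool) :
    face (T.star D d' hd' x) b d hd
      = .star (D.erase d) d' (Finset.mem_erase_of_ne_of_mem h hd') (face x b d hd) := by
  simp [face, h]

theorem face_cast {D₁ D₂ : Finset ℕ} (h : D₁ = D₂) (x : T A D₁) {d : ℕ}
    (hd₂ : d ∈ D₂) (hd₁ : d ∈ D₁) (b : Bool) :
    HEq (face (cast (congrArg (T A) h) x) b d hd₂) (face x b d hd₁) := by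
  subst h; rfl

end Cub
namespace Cub
variable {A : OmegaSet}

theorem face_face : ∀ {D : Finset ℕ} (x : T A D) (b₁ b₂ : Bool) (d e : ℕ)
    (hd : d ∈ D) (he : e ∈ D) (hed : e ≠ d),
    HEq (face (face x b₁ d hd) b₂ e (Finset.mem_erase_of_ne_of_mem hed he))
        (face (face x b₂ e he) b₁ d (Finset.mem_erase_of_ne_of_mem (Ne.symm hed) hd)) := by
  intro D x
  induction x with
  | gen D q =>
      intro b₁ b₂ d e hd he hed
      rw [face_gen, face_gen, face_gen, face_gen]
      exact gen_heq (ec D d e) (Qface_comm A b₁ b₂ D d e hd he hed q)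
  | comp D d' hd' x y ihx ihy =>
      intro b₁ b₂ d e hd he hed
      by_cases h1 : d' = d
      · subst h1
        rw [face_comp_same, face_comp_ne (fun hh => hed hh.symm) hd' he x y b₂,
          face_comp_same]
        cases b₁
        · simp only [cond_false]; exact ihy false b₂ d' e hd he hed
        · simp only [cond_true]; exact ihx true b₂ d' e hd he hed
      · by_cases h2 : d' = e
        · subst h2
          rw [face_comp_same, face_comp_ne h1 hd' hd x y b₁, face_comp_same]
          cases b₂
          · simp only [cond_false]; exact ihy b₁ false d d' hd he hed
          · simp only [cond_true]; exact ihx b₁ true d d' hd he hed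
        · rw [face_comp_ne h1 hd' hd x y b₁, face_comp_ne h2 hd' he x y b₂,
            face_comp_ne, face_comp_ne]
          · exact comp_heq (ec D d e) _ _ (ihx b₁ b₂ d e hd he hed) (ihy b₁ b₂ d e hd he hed)
          · exact h1
          · exact h2
  | iota D d' hd' x ih =>
      intro b₁ b₂ d e hd he hed
      by_cases h1 : d' = d
      · subst h1
        rw [face_iota_same, face_iota_ne (fun hh => hed hh.symm) hd' he x b₂, face_iota_same]
        exact ((cast_heq _ _).symm : HEq _ (cast (congrArg (T A) (ec D d' e)) _))
      · by_cases h2 : d' = e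
        · subst h2
          rw [face_iota_ne h1 hd' hd x b₁, face_iota_same, face_iota_same]
          exact cast_heq _ _
        · rw [face_iota_ne h1 hd' hd x b₁, face_iota_ne h2 hd' he x b₂,
            face_iota_ne h1, face_iota_ne h2]
          have hdd : d ∈ D.erase d' := Finset.mem_erase_of_ne_of_mem (fun hh => h1 hh.symm) hd
          have hee : e ∈ D.erase d' := Finset.mem_erase_of_ne_of_mem (fun hh => h2 hh.symm) he
          have hde : e ∈ (D.erase d').erase d := Finset.mem_erase_of_ne_of_mem hed hee
          have hed' : d ∈ (D.erase d').erase e := Finset.mem_erase_of_ne_of_mem (Ne.symm hed) hdd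
          refine iota_heq (ec D d e) _ _ ?_
          refine (cast_heq _ _).trans
            (((face_cast (ec D d' d) (face x b₁ d hdd) _ hde b₂).trans
              ((ih b₁ b₂ d e hdd hee hed).trans ?_)))
          exact ((cast_heq _ _).trans (face_cast (ec D d' e) (face x b₂ e hee) _ hed' b₁)).symm
  | star D d' hd' x ih =>
      intro b₁ b₂ d e hd he hed
      by_cases h1 : d' = d
      · subst h1
        rw [face_star_same, face_star_ne (fun hh => hed hh.symm) hd' he x b₂, face_star_same]
        exact ih (!b₁) b₂ d' e hd he hed
      · by_cases h2 : d' = e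
        · subst h2
          rw [face_star_ne h1 hd' hd x b₁, face_star_same, face_star_same]
          exact ih b₁ (!b₂) d d' hd he hed
        · rw [face_star_ne h1 hd' hd x b₁, face_star_ne h2 hd' he x b₂,
            face_star_ne h1, face_star_ne h2]
          exact star_heq (ec D d e) _ _ (ih b₁ b₂ d e hd he hed)
end Cub
namespace Cub
variable {A : OmegaSet}

/-- well-formed raw terms: compositions only along matching faces -/
def WF : ∀ {D : Finset ℕ}, T A D → Prop
  | _, .gen _ _ => True
  | _, .comp D d hd x y => WF x ∧ WF y ∧ face x false d hd = face y true d hd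
  | _, .iota _ _ _ x => WF x
  | _, .star _ _ _ x => WF x

theorem wf_cast {D₁ D₂ : Finset ℕ} (h : D₁ = D₂) {x : T A D₁} (w : WF x) :
    WF (cast (congrArg (T A) h) x) := by subst h; exact w

theorem wf_face : ∀ {D : Finset ℕ} (x : T A D), WF x → ∀ (b : Bool) (d : ℕ) (hd : d ∈ D),
    WF (face x b d hd) := by
  intro D x
  induction x with
  | gen D q => intro _ b d hd; rw [face_gen]; trivial
  | comp D d' hd' x y ihx ihy =>
      rintro ⟨wx, wy, hc⟩ b d hd
      by_cases h1 : d' = d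
      · subst h1
        rw [face_comp_same]
        cases b
        · exact ihy wy false d' hd
        · exact ihx wx true d' hd
      · rw [face_comp_ne h1 hd' hd x y b]
        refine ⟨ihx wx b d hd, ihy wy b d hd, ?_⟩
        have hcc := congrArg (fun z => face z b d (Finset.mem_erase_of_ne_of_mem
          (fun hh => h1 hh.symm) hd)) hc
        exact eq_of_heq ((face_face x b false d d' hd hd' h1).trans
          ((heq_of_eq hcc).trans (face_face y b true d d' hd hd' h1).symm))
  | iota D d' hd' x ih =>
      intro w b d hd
      by_cases h1 : d' = d
      · subst h1; rw [face_iota_same]; exact w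
      · rw [face_iota_ne h1 hd' hd x b]
        exact wf_cast (ec D d' d) (ih w b d _)
  | star D d' hd' x ih =>
      intro w b d hd
      by_cases h1 : d' = d
      · subst h1; rw [face_star_same]; exact ih w (!b) d' hd
      · rw [face_star_ne h1 hd' hd x b]; exact ih w b d hd

/-- carrier of the free magma -/
def FQ (A : OmegaSet) (D : Finset ℕ) : Type := {z : T A D // WF z}

theorem mk_heq {D₁ D₂ : Finset ℕ} (h : D₁ = D₂) {x₁ : T A D₁} {x₂ : T A D₂}
    (w₁ : WF x₁) (w₂ : WF x₂) (hx : HEq x₁ x₂) :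
    HEq (⟨x₁, w₁⟩ : FQ A D₁) (⟨x₂, w₂⟩ : FQ A D₂) := by
  subst h; cases hx; rfl

theorem val_cast {D₁ D₂ : Finset ℕ} (h : D₁ = D₂) (z : FQ A D₁) :
    (cast (congrArg (FQ A) h) z).val = cast (congrArg (T A) h) z.val := by subst h; rfl

/-- the free self-dual reflective cubical ω-magma on `A` -/
def FreeM (A : OmegaSet) : SDRMagma where
  Q := FQ A
  s D d hd z := ⟨face z.1 false d hd, wf_face z.1 z.2 false d hd⟩
  t D d hd z := ⟨face z.1 true d hd, wf_face z.1 z.2 true d hd⟩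
  ss D d e hd he hed z := by
    refine eq_of_heq ((mk_heq (ec D d e) _ _ ?_).trans (cast_heq _ _).symm)
    exact face_face z.1 false false d e hd he hed
  tt D d e hd he hed z := by
    refine eq_of_heq ((mk_heq (ec D d e) _ _ ?_).trans (cast_heq _ _).symm)
    exact face_face z.1 true true d e hd he hed
  st D d e hd he hed z := by
    refine eq_of_heq ((mk_heq (ec D d e) _ _ ?_).trans (cast_heq _ _).symm)
    exact face_face z.1 true false d e hd he hed
  ts D d e hd he hed z := by
    refine eq_of_heq ((mk_heq (ec D d e) _ _ ?_).trans (cast_heq _ _).symm)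
    exact face_face z.1 false true d e hd he hed
  comp D d hd x y h :=
    ⟨T.comp D d hd x.1 y.1, x.2, y.2, congrArg Subtype.val h⟩
  s_comp D d hd x y h := by
    apply Subtype.ext
    show face (T.comp D d hd x.1 y.1) false d hd = face y.1 false d hd
    rw [face_comp_same]; rfl
  t_comp D d hd x y h := by
    apply Subtype.ext
    show face (T.comp D d hd x.1 y.1) true d hd = face x.1 true d hd
    rw [face_comp_same]; rfl
  s_comp_ne D d e hd he hed x y h h' := by
    apply Subtype.ext
    show face (T.comp D d hd x.1 y.1) false e he
      = T.comp (D.erase e) d (Finset.mem_erase_of_ne_of_mem (Ne.symm hed) hd)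
          (face x.1 false e he) (face y.1 false e he)
    rw [face_comp_ne (fun hh => hed hh.symm) hd he]
  t_comp_ne D d e hd he hed x y h h' := by
    apply Subtype.ext
    show face (T.comp D d hd x.1 y.1) true e he
      = T.comp (D.erase e) d (Finset.mem_erase_of_ne_of_mem (Ne.symm hed) hd)
          (face x.1 true e he) (face y.1 true e he)
    rw [face_comp_ne (fun hh => hed hh.symm) hd he]
  iota D d hd x := ⟨T.iota D d hd x.1, x.2⟩
  s_iota D d hd x := by
    apply Subtype.ext
    show face (T.iota D d hd x.1) false d hd = x.1
    rw [face_iota_same]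
  t_iota D d hd x := by
    apply Subtype.ext
    show face (T.iota D d hd x.1) true d hd = x.1
    rw [face_iota_same]
  s_iota_ne D d e hd he hed x := by
    apply Subtype.ext
    show face (T.iota D d hd x.1) false e he
      = T.iota (D.erase e) d (Finset.mem_erase_of_ne_of_mem (Ne.symm hed) hd)
          ((cast (congrArg (FQ A) (ec D d e))
            (⟨face x.1 false e (Finset.mem_erase_of_ne_of_mem hed he),
              wf_face x.1 x.2 false e (Finset.mem_erase_of_ne_of_mem hed he)⟩ :
              FQ A ((D.erase d).erase e))).val)
    exact (face_iota_ne (fun hh => hed hh.symm) hd he x.1 false).trans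
      (congrArg (T.iota (D.erase e) d (Finset.mem_erase_of_ne_of_mem (Ne.symm hed) hd))
        (val_cast (ec D d e) (⟨face x.1 false e (Finset.mem_erase_of_ne_of_mem hed he),
          wf_face x.1 x.2 false e (Finset.mem_erase_of_ne_of_mem hed he)⟩ :
            FQ A ((D.erase d).erase e))).symm)
  t_iota_ne D d e hd he hed x := by
    apply Subtype.ext
    show face (T.iota D d hd x.1) true e he
      = T.iota (D.erase e) d (Finset.mem_erase_of_ne_of_mem (Ne.symm hed) hd)
          ((cast (congrArg (FQ A) (ec D d e))
            (⟨face x.1 true e (Finset.mem_erase_of_ne_of_mem hed he),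
              wf_face x.1 x.2 true e (Finset.mem_erase_of_ne_of_mem hed he)⟩ :
              FQ A ((D.erase d).erase e))).val)
    exact (face_iota_ne (fun hh => hed hh.symm) hd he x.1 true).trans
      (congrArg (T.iota (D.erase e) d (Finset.mem_erase_of_ne_of_mem (Ne.symm hed) hd))
        (val_cast (ec D d e) (⟨face x.1 true e (Finset.mem_erase_of_ne_of_mem hed he),
          wf_face x.1 x.2 true e (Finset.mem_erase_of_ne_of_mem hed he)⟩ :
            FQ A ((D.erase d).erase e))).symm)
  star D d hd x := ⟨T.star D d hd x.1, x.2⟩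
  s_star D d hd x := by
    apply Subtype.ext
    show face (T.star D d hd x.1) false d hd = face x.1 true d hd
    rw [face_star_same]; rfl
  t_star D d hd x := by
    apply Subtype.ext
    show face (T.star D d hd x.1) true d hd = face x.1 false d hd
    rw [face_star_same]; rfl
  s_star_ne D d e hd he hed x := by
    apply Subtype.ext
    show face (T.star D d hd x.1) false e he
      = T.star (D.erase e) d (Finset.mem_erase_of_ne_of_mem (Ne.symm hed) hd)
          (face x.1 false e he)
    rw [face_star_ne (fun hh => hed hh.symm) hd he]
  t_star_ne D d e hd he hed x := by
    apply Subtype.ext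
    show face (T.star D d hd x.1) true e he
      = T.star (D.erase e) d (Finset.mem_erase_of_ne_of_mem (Ne.symm hed) hd)
          (face x.1 true e he)
    rw [face_star_ne (fun hh => hed hh.symm) hd he]
end Cub
namespace Cub
attribute [local instance] Classical.propDecidable

variable {A : OmegaSet}

/-- evaluation of raw terms in a self-dual reflective cubical ω-magma -/
noncomputable def ext (M' : SDRMagma) (φ : ∀ D : Finset ℕ, A.Q D → M'.Q D) :
    ∀ {D : Finset ℕ}, T A D → M'.Q D
  | _, .gen D q => φ D q
  | _, .comp D d hd x y =>
      if h : M'.s D d hd (ext M' φ x) = M'.t D d hd (ext M' φ y) then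
        M'.comp D d hd (ext M' φ x) (ext M' φ y) h
      else ext M' φ x
  | _, .iota D d hd x => M'.iota D d hd (ext M' φ x)
  | _, .star D d hd x => M'.star D d hd (ext M' φ x)

variable {M' : SDRMagma} {φ : ∀ D : Finset ℕ, A.Q D → M'.Q D}

theorem ext_gen {D : Finset ℕ} (q : A.Q D) : ext M' φ (T.gen D q) = φ D q := by simp [ext]

theorem ext_comp {D : Finset ℕ} (d : ℕ) (hd : d ∈ D) (x y : T A D) :
    ext M' φ (T.comp D d hd x y)
      = if h : M'.s D d hd (ext M' φ x) = M'.t D d hd (ext M' φ y) then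
          M'.comp D d hd (ext M' φ x) (ext M' φ y) h
        else ext M' φ x := by simp [ext]

theorem ext_iota {D : Finset ℕ} (d : ℕ) (hd : d ∈ D) (x : T A (D.erase d)) :
    ext M' φ (T.iota D d hd x) = M'.iota D d hd (ext M' φ x) := by simp [ext]

theorem ext_star {D : Finset ℕ} (d : ℕ) (hd : d ∈ D) (x : T A D) :
    ext M' φ (T.star D d hd x) = M'.star D d hd (ext M' φ x) := by simp [ext]

theorem ext_cast {D₁ D₂ : Finset ℕ} (h : D₁ = D₂) (x : T A D₁) :
    ext M' φ (cast (congrArg (T A) h) x) = cast (congrArg M'.Q h) (ext M' φ x) := by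
  subst h; rfl

theorem comp_congr (B : SDRMagma) {D : Finset ℕ} {d : ℕ} {hd : d ∈ D}
    {x₁ y₁ x₂ y₂ : B.Q D} (hx : x₁ = x₂) (hy : y₁ = y₂)
    (h₁ : B.s D d hd x₁ = B.t D d hd y₁) (h₂ : B.s D d hd x₂ = B.t D d hd y₂) :
    B.comp D d hd x₁ y₁ h₁ = B.comp D d hd x₂ y₂ h₂ := by subst hx; subst hy; rfl

/-- the key lemma: evaluation commutes with faces on well-formed terms -/
theorem ext_face (hφ : IsHom A M'.toOmegaSet φ) :
    ∀ {D : Finset ℕ} (x : T A D), WF x → ∀ (b : Bool) (d : ℕ) (hd : d ∈ D),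
      Qface M'.toOmegaSet b D d hd (ext M' φ x) = ext M' φ (face x b d hd) := by
  intro D x
  induction x with
  | gen D q =>
      intro _ b d hd
      rw [face_gen, ext_gen, ext_gen]
      cases b
      · exact hφ.1 D d hd q
      · exact hφ.2 D d hd q
  | comp D d' hd' x y ihx ihy =>
      rintro ⟨wx, wy, hc⟩ b d hd
      have hside : M'.s D d' hd' (ext M' φ x) = M'.t D d' hd' (ext M' φ y) := by
        have h1 := ihx wx false d' hd'
        have h2 := ihy wy true d' hd'
        simp only [Qface, cond_false, cond_true] at h1 h2
        rw [h1, h2, hc]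
      rw [ext_comp, dif_pos hside]
      by_cases h1 : d' = d
      · subst h1
        rw [face_comp_same]
        cases b
        · simp only [cond_false]
          rw [← ihy wy false d' hd]
          simp only [Qface, cond_false]
          exact M'.s_comp D d' hd' _ _ hside
        · simp only [cond_true]
          rw [← ihx wx true d' hd]
          simp only [Qface, cond_true]
          exact M'.t_comp D d' hd' _ _ hside
      · have hdd : ¬ d = d' := fun hh => h1 hh.symm
        have hside' : M'.s (D.erase d) d' (Finset.mem_erase_of_ne_of_mem h1 hd')
              (Qface M'.toOmegaSet b D d hd (ext M' φ x))
            = M'.t (D.erase d) d' (Finset.mem_erase_of_ne_of_mem h1 hd')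
              (Qface M'.toOmegaSet b D d hd (ext M' φ y)) :=
          sdtd M'.toOmegaSet D d' d hd' hd hdd _ _ hside b
        rw [face_comp_ne h1 hd' hd x y b, ext_comp]
        have hside'' : M'.s (D.erase d) d' (Finset.mem_erase_of_ne_of_mem h1 hd')
              (ext M' φ (face x b d hd))
            = M'.t (D.erase d) d' (Finset.mem_erase_of_ne_of_mem h1 hd')
              (ext M' φ (face y b d hd)) := by
          rw [← ihx wx b d hd, ← ihy wy b d hd]; exact hside'
        rw [dif_pos hside'']
        cases b
        · simp only [Qface, cond_false]
          rw [M'.s_comp_ne D d' d hd' hd hdd _ _ hside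
            (by simpa only [Qface, cond_false] using hside')]
          exact comp_congr M' (by simpa only [Qface, cond_false] using ihx wx false d hd)
            (by simpa only [Qface, cond_false] using ihy wy false d hd) _ _
        · simp only [Qface, cond_true]
          rw [M'.t_comp_ne D d' d hd' hd hdd _ _ hside
            (by simpa only [Qface, cond_true] using hside')]
          exact comp_congr M' (by simpa only [Qface, cond_true] using ihx wx true d hd)
            (by simpa only [Qface, cond_true] using ihy wy true d hd) _ _
  | iota D d' hd' x ih =>
      intro w b d hd
      rw [ext_iota]
      by_cases h1 : d' = d
      · subst h1
        rw [face_iota_same]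
        cases b
        · simp only [Qface, cond_false]; exact M'.s_iota D d' hd' _
        · simp only [Qface, cond_true]; exact M'.t_iota D d' hd' _
      · rw [face_iota_ne h1 hd' hd x b, ext_iota, ext_cast (ec D d' d), ← ih w b d _]
        cases b
        · simp only [Qface, cond_false]
          exact M'.s_iota_ne D d' d hd' hd (fun hh => h1 hh.symm) _
        · simp only [Qface, cond_true]
          exact M'.t_iota_ne D d' d hd' hd (fun hh => h1 hh.symm) _
  | star D d' hd' x ih =>
      intro w b d hd
      rw [ext_star]
      by_cases h1 : d' = d
      · subst h1
        rw [face_star_same, ← ih w (!b) d' hd]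
        cases b
        · simp only [Qface, cond_false, Bool.not_false, cond_true]
          exact M'.s_star D d' hd' _
        · simp only [Qface, cond_true, Bool.not_true, cond_false]
          exact M'.t_star D d' hd' _
      · rw [face_star_ne h1 hd' hd x b, ext_star, ← ih w b d hd]
        cases b
        · simp only [Qface, cond_false]
          exact M'.s_star_ne D d' d hd' hd (fun hh => h1 hh.symm) _
        · simp only [Qface, cond_true]
          exact M'.t_star_ne D d' d hd' hd (fun hh => h1 hh.symm) _
end Cub

namespace Cub

attribute [local instance] Classical.propDecidable

theorem free_SDR_exists' (Q : OmegaSet) :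
    ∃ (M : SDRMagma) (η : ∀ D : Finset ℕ, Q.Q D → M.Q D),
      IsFreeSDR Q M η ∧ ∀ D : Finset ℕ, Function.Injective (η D) := by
  refine ⟨FreeM Q, fun D q => ⟨T.gen D q, trivial⟩, ⟨⟨?_, ?_⟩, ?_⟩, ?_⟩
  · intro D d hd q
    exact Subtype.ext (face_gen q false d hd)
  · intro D d hd q
    exact Subtype.ext (face_gen q true d hd)
  · intro M' φ hφ
    refine ⟨fun D z => ext M' φ z.1, ⟨⟨?_, ?_, ?_, ?_, ?_⟩, ?_⟩, ?_⟩
    · intro D d hd z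
      exact ext_face hφ z.1 z.2 false d hd
    · intro D d hd z
      exact ext_face hφ z.1 z.2 true d hd
    · intro D d hd x y h h'
      show ext M' φ (T.comp D d hd x.1 y.1)
        = M'.comp D d hd (ext M' φ x.1) (ext M' φ y.1) h'
      rw [ext_comp]
      exact dif_pos h'
    · intro D d hd x
      exact ext_iota d hd x.1
    · intro D d hd x
      exact ext_star d hd x.1
    · intro D q
      exact ext_gen q
    · rintro ψ' ⟨⟨hs, ht, hcmp, hio, hst⟩, hcomm⟩
      have key : ∀ {D : Finset ℕ} (x : T Q D) (w : WF x), ψ' D ⟨x, w⟩ = ext M' φ x := by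
        intro D x
        induction x with
        | gen D q =>
            intro w
            rw [ext_gen]
            exact hcomm D q
        | comp D d hd x y ihx ihy =>
            rintro ⟨wx, wy, hcnd⟩
            have hside : M'.s D d hd (ψ' D ⟨x, wx⟩) = M'.t D d hd (ψ' D ⟨y, wy⟩) := by
              rw [hs D d hd ⟨x, wx⟩, ht D d hd ⟨y, wy⟩]
              exact congrArg (ψ' (D.erase d)) (Subtype.ext hcnd)
            have h2 := hcmp D d hd ⟨x, wx⟩ ⟨y, wy⟩ (Subtype.ext hcnd) hside
            have hside2 : M'.s D d hd (ext M' φ x) = M'.t D d hd (ext M' φ y) := by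
              rw [← ihx wx, ← ihy wy]; exact hside
            rw [ext_comp, dif_pos hside2]
            calc ψ' D ⟨T.comp D d hd x y, ⟨wx, wy, hcnd⟩⟩
                = M'.comp D d hd (ψ' D ⟨x, wx⟩) (ψ' D ⟨y, wy⟩) hside := h2
              _ = M'.comp D d hd (ext M' φ x) (ext M' φ y) hside2 :=
                  comp_congr M' (ihx wx) (ihy wy) _ _
        | iota D d hd x ih =>
            intro w
            rw [ext_iota, ← ih w]
            exact hio D d hd ⟨x, w⟩
        | star D d hd x ih =>
            intro w
            rw [ext_star, ← ih w]
            exact hst D d hd ⟨x, w⟩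
      funext D z
      obtain ⟨x, w⟩ := z
      exact key x w
  · intro D a b h
    have h1 : T.gen D a = T.gen D b := congrArg Subtype.val h
    injection h1

end Cub

namespace Cub

/-- over every cubical ω-set there exists a free self-dual reflective
cubical ω-magma, whose structural morphism `η` is injective in every dimension and
satisfies the universal factorization property. -/
theorem free_SDR_exists (Q : OmegaSet) :
    ∃ (M : SDRMagma) (η : ∀ D : Finset ℕ, Q.Q D → M.Q D),
      IsFreeSDR Q M η ∧ ∀ D : Finset ℕ, Function.Injective (η D) := by
  exact free_SDR_exists' Q

end Cub
end

section
/- Every weak cubical ω-groupoid (an algebra for the Penon-Kachour monad on cubical ω-sets in which every n-cell has directional inverses) carries the structure of an involutive weak cubical ω-category, with the self-duality in direction d given by the directional inverse in direction d; in the strict case this means: if C is a strict cubical ω-category in which every n-cell x has, for each d ∈ D, a cell x^{-1_d} with x ∘_{D,d} x^{-1_d} = ι_{D,d}(t_{D,d}(x)) and x^{-1_d} ∘_{D,d} x = ι_{D,d}(s_{D,d}(x)), then setting x^{*_{D,d}} := x^{-1_d} satisfies all the axioms of a strict involutive cubical ω-category (involutivity, commutativity of distinct-direction involutions, functoriality,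 and Hermitianity of identities). -/
namespace Cub

/-- A strict cubical ω-category (no involutions): a reflective cubical ω-magma with
associative unital compositions, functorial identities and the exchange law. -/
structure StrictCat extends OmegaSet where
  comp : ∀ (D : Finset ℕ) (d : ℕ) (hd : d ∈ D) (x y : Q D),
    s D d hd x = t D d hd y → Q D
  s_comp : ∀ (D : Finset ℕ) (d : ℕ) (hd : d ∈ D) (x y : Q D)
      (h : s D d hd x = t D d hd y),
    s D d hd (comp D d hd x y h) = s D d hd y
  t_comp : ∀ (D : Finset ℕ) (d : ℕ) (hd : d ∈ D) (x y : Q D)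
      (h : s D d hd x = t D d hd y),
    t D d hd (comp D d hd x y h) = t D d hd x
  s_comp_ne : ∀ (D : Finset ℕ) (d e : ℕ) (hd : d ∈ D) (he : e ∈ D) (hed : e ≠ d)
      (x y : Q D) (h : s D d hd x = t D d hd y)
      (h' : s (D.erase e) d (Finset.mem_erase_of_ne_of_mem (Ne.symm hed) hd) (s D e he x)
          = t (D.erase e) d (Finset.mem_erase_of_ne_of_mem (Ne.symm hed) hd) (s D e he y)),
    s D e he (comp D d hd x y h)
      = comp (D.erase e) d (Finset.mem_erase_of_ne_of_mem (Ne.symm hed) hd)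
          (s D e he x) (s D e he y) h'
  t_comp_ne : ∀ (D : Finset ℕ) (d e : ℕ) (hd : d ∈ D) (he : e ∈ D) (hed : e ≠ d)
      (x y : Q D) (h : s D d hd x = t D d hd y)
      (h' : s (D.erase e) d (Finset.mem_erase_of_ne_of_mem (Ne.symm hed) hd) (t D e he x)
          = t (D.erase e) d (Finset.mem_erase_of_ne_of_mem (Ne.symm hed) hd) (t D e he y)),
    t D e he (comp D d hd x y h)
      = comp (D.erase e) d (Finset.mem_erase_of_ne_of_mem (Ne.symm hed) hd)
          (t D e he x) (t D e he y) h'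
  iota : ∀ (D : Finset ℕ) (d : ℕ), d ∈ D → Q (D.erase d) → Q D
  s_iota : ∀ (D : Finset ℕ) (d : ℕ) (hd : d ∈ D) (x : Q (D.erase d)),
    s D d hd (iota D d hd x) = x
  t_iota : ∀ (D : Finset ℕ) (d : ℕ) (hd : d ∈ D) (x : Q (D.erase d)),
    t D d hd (iota D d hd x) = x
  s_iota_ne : ∀ (D : Finset ℕ) (d e : ℕ) (hd : d ∈ D) (he : e ∈ D) (hed : e ≠ d)
      (x : Q (D.erase d)),
    s D e he (iota D d hd x)
      = iota (D.erase e) d (Finset.mem_erase_of_ne_of_mem (Ne.symm hed) hd)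
          (cast (congrArg Q (ec D d e))
            (s (D.erase d) e (Finset.mem_erase_of_ne_of_mem hed he) x))
  t_iota_ne : ∀ (D : Finset ℕ) (d e : ℕ) (hd : d ∈ D) (he : e ∈ D) (hed : e ≠ d)
      (x : Q (D.erase d)),
    t D e he (iota D d hd x)
      = iota (D.erase e) d (Finset.mem_erase_of_ne_of_mem (Ne.symm hed) hd)
          (cast (congrArg Q (ec D d e))
            (t (D.erase d) e (Finset.mem_erase_of_ne_of_mem hed he) x))
  assoc : ∀ (D : Finset ℕ) (d : ℕ) (hd : d ∈ D) (x y z : Q D)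
      (hxy : s D d hd x = t D d hd y) (hyz : s D d hd y = t D d hd z)
      (h1 : s D d hd x = t D d hd (comp D d hd y z hyz))
      (h2 : s D d hd (comp D d hd x y hxy) = t D d hd z),
    comp D d hd x (comp D d hd y z hyz) h1 = comp D d hd (comp D d hd x y hxy) z h2
  unit_r : ∀ (D : Finset ℕ) (d : ℕ) (hd : d ∈ D) (x : Q D)
      (h : s D d hd x = t D d hd (iota D d hd (s D d hd x))),
    comp D d hd x (iota D d hd (s D d hd x)) h = x
  unit_l : ∀ (D : Finset ℕ) (d : ℕ) (hd : d ∈ D) (x : Q D)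
      (h : s D d hd (iota D d hd (t D d hd x)) = t D d hd x),
    comp D d hd (iota D d hd (t D d hd x)) x h = x
  iota_comp : ∀ (D : Finset ℕ) (d e : ℕ) (hd : d ∈ D) (he : e ∈ D.erase d) (he2 : e ∈ D)
      (x y : Q (D.erase d))
      (h : s (D.erase d) e he x = t (D.erase d) e he y)
      (h' : s D e he2 (iota D d hd x) = t D e he2 (iota D d hd y)),
    iota D d hd (comp (D.erase d) e he x y h)
      = comp D e he2 (iota D d hd x) (iota D d hd y) h'
  exchange : ∀ (D : Finset ℕ) (e f : ℕ) (he : e ∈ D) (hf : f ∈ D) (_ : e ≠ f)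
      (x y w z : Q D)
      (hxy : s D e he x = t D e he y) (hwz : s D e he w = t D e he z)
      (hxw : s D f hf x = t D f hf w) (hyz : s D f hf y = t D f hf z)
      (h1 : s D f hf (comp D e he x y hxy) = t D f hf (comp D e he w z hwz))
      (h2 : s D e he (comp D f hf x w hxw) = t D e he (comp D f hf y z hyz)),
    comp D f hf (comp D e he x y hxy) (comp D e he w z hwz) h1
      = comp D e he (comp D f hf x w hxw) (comp D f hf y z hyz) h2

/-!
Directional inverses are unique, since a left and a right inverse of a cell coincide by
associativity and unitality. Each axiom is therefore proved by exhibiting the proposed cell as a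
left inverse. Transverse sources and targets, identities, and (through the exchange law)
composition in another direction are all compatible with `∘_d`, so they carry `d`-inverses to
`d`-inverses; in direction `d` itself one gets the group laws `(x ∘ y)⁻¹ = y⁻¹ ∘ x⁻¹` and
`(x⁻¹)⁻¹ = x`. The one needed fact absent from the axioms, `ι_d ι_e = ι_e ι_d`, follows from an
Eckmann–Hilton argument.
-/

namespace OmegaSet

variable (X : OmegaSet) {D : Finset ℕ} {d e : ℕ}

theorem s_ne_composable (hd : d ∈ D) (he : e ∈ D) (hed : e ≠ d) {x y : X.Q D}
    (h : X.s D d hd x = X.t D d hd y) :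
    X.s (D.erase e) d (Finset.mem_erase_of_ne_of_mem (Ne.symm hed) hd) (X.s D e he x)
      = X.t (D.erase e) d (Finset.mem_erase_of_ne_of_mem (Ne.symm hed) hd) (X.s D e he y) :=
  (cast_inj _).mp (by rw [← X.ss D d e hd he hed x, h, X.st D d e hd he hed y])

theorem t_ne_composable (hd : d ∈ D) (he : e ∈ D) (hed : e ≠ d) {x y : X.Q D}
    (h : X.s D d hd x = X.t D d hd y) :
    X.s (D.erase e) d (Finset.mem_erase_of_ne_of_mem (Ne.symm hed) hd) (X.t D e he x)
      = X.t (D.erase e) d (Finset.mem_erase_of_ne_of_mem (Ne.symm hed) hd) (X.t D e he y) :=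
  (cast_inj _).mp (by rw [← X.ts D d e hd he hed x, h, X.tt D d e hd he hed y])

end OmegaSet

namespace StrictCat

variable (C : StrictCat) {D : Finset ℕ} {d e : ℕ}

theorem comp_congr {hd : d ∈ D} {x x' y y' : C.Q D} (hx : x = x') (hy : y = y')
    (h : C.s D d hd x = C.t D d hd y) (h' : C.s D d hd x' = C.t D d hd y') :
    C.comp D d hd x y h = C.comp D d hd x' y' h' := by
  subst hx hy; rfl

theorem unit_r_of_eq {hd : d ∈ D} {x z : C.Q D} (hz : z = C.iota D d hd (C.s D d hd x))
    (h : C.s D d hd x = C.t D d hd z) : C.comp D d hd x z h = x := by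
  subst hz; exact C.unit_r D d hd x h

theorem unit_l_of_eq {hd : d ∈ D} {x z : C.Q D} (hz : z = C.iota D d hd (C.t D d hd x))
    (h : C.s D d hd z = C.t D d hd x) : C.comp D d hd z x h = x := by
  subst hz; exact C.unit_l D d hd x h

theorem s_comp_of_ne (hd : d ∈ D) (he : e ∈ D) (hed : e ≠ d) {x y : C.Q D}
    (h : C.s D d hd x = C.t D d hd y) :
    C.s D e he (C.comp D d hd x y h)
      = C.comp (D.erase e) d (Finset.mem_erase_of_ne_of_mem (Ne.symm hed) hd)
          (C.s D e he x) (C.s D e he y) (C.s_ne_composable hd he hed h) :=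
  C.s_comp_ne D d e hd he hed x y h _

theorem t_comp_of_ne (hd : d ∈ D) (he : e ∈ D) (hed : e ≠ d) {x y : C.Q D}
    (h : C.s D d hd x = C.t D d hd y) :
    C.t D e he (C.comp D d hd x y h)
      = C.comp (D.erase e) d (Finset.mem_erase_of_ne_of_mem (Ne.symm hed) hd)
          (C.t D e he x) (C.t D e he y) (C.t_ne_composable hd he hed h) :=
  C.t_comp_ne D d e hd he hed x y h _

theorem eq_of_comp_eq_iota_of_comp_eq_iota {hd : d ∈ D} {x y z : C.Q D}
    (hyx : C.s D d hd y = C.t D d hd x) (hxz : C.s D d hd x = C.t D d hd z)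
    (hl : C.comp D d hd y x hyx = C.iota D d hd (C.s D d hd x))
    (hr : C.comp D d hd x z hxz = C.iota D d hd (C.t D d hd x)) : y = z := by
  have hy_xz : C.s D d hd y = C.t D d hd (C.comp D d hd x z hxz) := by
    rw [C.t_comp]; exact hyx
  have hyx_z : C.s D d hd (C.comp D d hd y x hyx) = C.t D d hd z := by
    rw [C.s_comp]; exact hxz
  calc y = C.comp D d hd y (C.comp D d hd x z hxz) hy_xz :=
        (C.unit_r_of_eq (by rw [hr, hyx]) hy_xz).symm
    _ = C.comp D d hd (C.comp D d hd y x hyx) z hyx_z :=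
        C.assoc D d hd y x z hyx hxz hy_xz hyx_z
    _ = z := C.unit_l_of_eq (by rw [hl, hxz]) hyx_z

/-- Eckmann–Hilton: by the exchange law,
`w = (w ∘ₑ z) ∘_d (z ∘ₑ w) = (w ∘_d z) ∘ₑ (z ∘_d w) = z`. -/
theorem eq_of_eq_iota_of_eq_iota (hd : d ∈ D) (he : e ∈ D) (hed : e ≠ d) {a : C.Q (D.erase d)}
    {b : C.Q (D.erase e)} {w z : C.Q D} (hw : w = C.iota D d hd a) (hz : z = C.iota D e he b)
    (hsz : C.s D d hd z = a) (htz : C.t D d hd z = a)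
    (hsw : C.s D e he w = b) (htw : C.t D e he w = b) : w = z := by
  have hwz_e : C.s D e he w = C.t D e he z := by rw [hsw, hz, C.t_iota]
  have hzw_e : C.s D e he z = C.t D e he w := by rw [htw, hz, C.s_iota]
  have hwz_d : C.s D d hd w = C.t D d hd z := by rw [htz, hw, C.s_iota]
  have hzw_d : C.s D d hd z = C.t D d hd w := by rw [hsz, hw, C.t_iota]
  have hwz : C.comp D e he w z hwz_e = w := C.unit_r_of_eq (by rw [hz, hsw]) hwz_e
  have hzw : C.comp D e he z w hzw_e = w := C.unit_l_of_eq (by rw [hz, htw]) hzw_e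
  have hwz' : C.comp D d hd w z hwz_d = z := C.unit_l_of_eq (by rw [hw, htz]) hwz_d
  have hzw' : C.comp D d hd z w hzw_d = z := C.unit_r_of_eq (by rw [hw, hsz]) hzw_d
  have hww : C.s D d hd w = C.t D d hd w := by rw [hw, C.s_iota, C.t_iota]
  have hzz : C.s D e he z = C.t D e he z := by rw [hz, C.s_iota, C.t_iota]
  have h1 : C.s D d hd (C.comp D e he w z hwz_e) = C.t D d hd (C.comp D e he z w hzw_e) := by
    rw [hwz, hzw]; exact hww
  have h2 : C.s D e he (C.comp D d hd w z hwz_d) = C.t D e he (C.comp D d hd z w hzw_d) := by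
    rw [hwz', hzw']; exact hzz
  calc w = C.comp D d hd w w hww := (C.unit_r_of_eq (by rw [hw, C.s_iota]) hww).symm
    _ = C.comp D d hd (C.comp D e he w z hwz_e) (C.comp D e he z w hzw_e) h1 :=
        C.comp_congr hwz.symm hzw.symm hww h1
    _ = C.comp D e he (C.comp D d hd w z hwz_d) (C.comp D d hd z w hzw_d) h2 :=
        C.exchange D e d he hd hed w z z w hwz_e hzw_e hwz_d hzw_d h1 h2
    _ = C.comp D e he z z hzz := C.comp_congr hwz' hzw' h2 hzz
    _ = z := C.unit_r_of_eq (by rw [hz, C.s_iota]) hzz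

theorem iota_iota_comm (hd : d ∈ D) (he : e ∈ D) (hed : e ≠ d) (v : C.Q ((D.erase d).erase e)) :
    C.iota D d hd (C.iota (D.erase d) e (Finset.mem_erase_of_ne_of_mem hed he) v)
      = C.iota D e he (C.iota (D.erase e) d (Finset.mem_erase_of_ne_of_mem (Ne.symm hed) hd)
          (cast (congrArg C.Q (ec D d e)) v)) := by
  refine C.eq_of_eq_iota_of_eq_iota hd he hed rfl rfl ?_ ?_ ?_ ?_
  · rw [C.s_iota_ne D e d he hd (Ne.symm hed), C.s_iota, cast_cast, cast_eq]
  · rw [C.t_iota_ne D e d he hd (Ne.symm hed), C.t_iota, cast_cast, cast_eq]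
  · rw [C.s_iota_ne D d e hd he hed, C.s_iota]
  · rw [C.t_iota_ne D d e hd he hed, C.t_iota]

end StrictCat

structure DirectionalInverses (C : StrictCat) where
  inv : ∀ (D : Finset ℕ) (d : ℕ), d ∈ D → C.Q D → C.Q D
  s_inv : ∀ (D : Finset ℕ) (d : ℕ) (hd : d ∈ D) (x : C.Q D),
    C.s D d hd (inv D d hd x) = C.t D d hd x
  t_inv : ∀ (D : Finset ℕ) (d : ℕ) (hd : d ∈ D) (x : C.Q D),
    C.t D d hd (inv D d hd x) = C.s D d hd x
  comp_inv_cancel : ∀ (D : Finset ℕ) (d : ℕ) (hd : d ∈ D) (x : C.Q D),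
    C.comp D d hd x (inv D d hd x) (t_inv D d hd x).symm = C.iota D d hd (C.t D d hd x)
  inv_comp_cancel : ∀ (D : Finset ℕ) (d : ℕ) (hd : d ∈ D) (x : C.Q D),
    C.comp D d hd (inv D d hd x) x (s_inv D d hd x) = C.iota D d hd (C.s D d hd x)

namespace DirectionalInverses

variable {C : StrictCat} (I : DirectionalInverses C)

theorem eq_inv_of_comp_eq_iota {D : Finset ℕ} {d : ℕ} {hd : d ∈ D} {x y : C.Q D}
    (h : C.s D d hd y = C.t D d hd x)
    (hyx : C.comp D d hd y x h = C.iota D d hd (C.s D d hd x)) : y = I.inv D d hd x :=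
  C.eq_of_comp_eq_iota_of_comp_eq_iota h (I.t_inv D d hd x).symm hyx (I.comp_inv_cancel D d hd x)

theorem inv_comp_cancel_left {D : Finset ℕ} {d : ℕ} {hd : d ∈ D} {x y : C.Q D}
    (h : C.s D d hd x = C.t D d hd y)
    (h' : C.s D d hd (I.inv D d hd x) = C.t D d hd (C.comp D d hd x y h)) :
    C.comp D d hd (I.inv D d hd x) (C.comp D d hd x y h) h' = y := by
  have hxy : C.s D d hd (C.comp D d hd (I.inv D d hd x) x (I.s_inv D d hd x)) = C.t D d hd y := by
    rw [C.s_comp]; exact h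
  exact (C.assoc D d hd _ x y (I.s_inv D d hd x) h h' hxy).trans
    (C.unit_l_of_eq (by rw [I.inv_comp_cancel, h]) hxy)

theorem inv_inv (D : Finset ℕ) (d : ℕ) (hd : d ∈ D) (x : C.Q D) :
    I.inv D d hd (I.inv D d hd x) = x :=
  (I.eq_inv_of_comp_eq_iota (I.t_inv D d hd x).symm (by rw [I.comp_inv_cancel, I.s_inv])).symm

theorem inv_iota (D : Finset ℕ) (d : ℕ) (hd : d ∈ D) (x : C.Q (D.erase d)) :
    I.inv D d hd (C.iota D d hd x) = C.iota D d hd x := by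
  have h : C.s D d hd (C.iota D d hd x) = C.t D d hd (C.iota D d hd x) := by
    rw [C.s_iota, C.t_iota]
  exact (I.eq_inv_of_comp_eq_iota h
    ((C.unit_r_of_eq (by rw [C.s_iota]) h).trans (by rw [C.s_iota]))).symm

theorem s_inv_ne (D : Finset ℕ) (d e : ℕ) (hd : d ∈ D) (he : e ∈ D) (hed : e ≠ d)
    (x : C.Q D) :
    C.s D e he (I.inv D d hd x)
      = I.inv (D.erase e) d (Finset.mem_erase_of_ne_of_mem (Ne.symm hed) hd) (C.s D e he x) := by
  refine I.eq_inv_of_comp_eq_iota (C.s_ne_composable hd he hed (I.s_inv D d hd x)) ?_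
  rw [← C.s_comp_of_ne hd he hed (I.s_inv D d hd x), I.inv_comp_cancel,
    C.s_iota_ne D d e hd he hed, C.ss D d e hd he hed x, cast_cast, cast_eq]

theorem t_inv_ne (D : Finset ℕ) (d e : ℕ) (hd : d ∈ D) (he : e ∈ D) (hed : e ≠ d)
    (x : C.Q D) :
    C.t D e he (I.inv D d hd x)
      = I.inv (D.erase e) d (Finset.mem_erase_of_ne_of_mem (Ne.symm hed) hd) (C.t D e he x) := by
  refine I.eq_inv_of_comp_eq_iota (C.t_ne_composable hd he hed (I.s_inv D d hd x)) ?_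
  rw [← C.t_comp_of_ne hd he hed (I.s_inv D d hd x), I.inv_comp_cancel,
    C.t_iota_ne D d e hd he hed, C.ts D d e hd he hed x, cast_cast, cast_eq]

theorem inv_comp_rev (D : Finset ℕ) (d : ℕ) (hd : d ∈ D) (x y : C.Q D)
    (h : C.s D d hd x = C.t D d hd y)
    (h' : C.s D d hd (I.inv D d hd y) = C.t D d hd (I.inv D d hd x)) :
    I.inv D d hd (C.comp D d hd x y h) = C.comp D d hd (I.inv D d hd y) (I.inv D d hd x) h' := by
  have hx : C.s D d hd (I.inv D d hd x) = C.t D d hd (C.comp D d hd x y h) := by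
    rw [C.t_comp, I.s_inv]
  have hy : C.s D d hd (I.inv D d hd y)
      = C.t D d hd (C.comp D d hd (I.inv D d hd x) (C.comp D d hd x y h) hx) := by
    rw [I.inv_comp_cancel_left, I.s_inv]
  have h1 : C.s D d hd (C.comp D d hd (I.inv D d hd y) (I.inv D d hd x) h')
      = C.t D d hd (C.comp D d hd x y h) := by
    rw [C.s_comp, C.t_comp, I.s_inv]
  refine (I.eq_inv_of_comp_eq_iota h1 ?_).symm
  calc C.comp D d hd (C.comp D d hd (I.inv D d hd y) (I.inv D d hd x) h') (C.comp D d hd x y h) h1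
      = C.comp D d hd (I.inv D d hd y)
          (C.comp D d hd (I.inv D d hd x) (C.comp D d hd x y h) hx) hy :=
        (C.assoc D d hd _ _ _ h' hx hy h1).symm
    _ = C.comp D d hd (I.inv D d hd y) y (I.s_inv D d hd y) :=
        C.comp_congr rfl (I.inv_comp_cancel_left h hx) hy _
    _ = C.iota D d hd (C.s D d hd (C.comp D d hd x y h)) := by
        rw [I.inv_comp_cancel, C.s_comp]

/-- By the exchange law, `(x⁻¹ ∘_d y⁻¹) ∘ₑ (x ∘_d y)` is the
`∘_d`-composite of the `e`-identities `x⁻¹ ∘ₑ x` and `y⁻¹ ∘ₑ y`. -/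
theorem inv_comp_ne (D : Finset ℕ) (d e : ℕ) (hd : d ∈ D) (he : e ∈ D) (hed : e ≠ d)
    (x y : C.Q D) (h : C.s D d hd x = C.t D d hd y)
    (h' : C.s D d hd (I.inv D e he x) = C.t D d hd (I.inv D e he y)) :
    I.inv D e he (C.comp D d hd x y h)
      = C.comp D d hd (I.inv D e he x) (I.inv D e he y) h' := by
  have h1 : C.s D e he (C.comp D d hd (I.inv D e he x) (I.inv D e he y) h')
      = C.t D e he (C.comp D d hd x y h) := by
    rw [C.s_comp_of_ne hd he hed, C.t_comp_of_ne hd he hed]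
    exact C.comp_congr (I.s_inv D e he x) (I.s_inv D e he y) _ _
  have hiota : C.s D d hd (C.iota D e he (C.s D e he x))
      = C.t D d hd (C.iota D e he (C.s D e he y)) := by
    rw [C.s_iota_ne D e d he hd (Ne.symm hed), C.t_iota_ne D e d he hd (Ne.symm hed),
      C.s_ne_composable hd he hed h]
  have h2 : C.s D d hd (C.comp D e he (I.inv D e he x) x (I.s_inv D e he x))
      = C.t D d hd (C.comp D e he (I.inv D e he y) y (I.s_inv D e he y)) := by
    rw [I.inv_comp_cancel, I.inv_comp_cancel]; exact hiota
  refine (I.eq_inv_of_comp_eq_iota h1 ?_).symm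
  calc C.comp D e he (C.comp D d hd (I.inv D e he x) (I.inv D e he y) h') (C.comp D d hd x y h) h1
      = C.comp D d hd (C.comp D e he (I.inv D e he x) x (I.s_inv D e he x))
          (C.comp D e he (I.inv D e he y) y (I.s_inv D e he y)) h2 :=
        C.exchange D d e hd he (Ne.symm hed) _ _ x y h' h _ _ h1 h2
    _ = C.comp D d hd (C.iota D e he (C.s D e he x)) (C.iota D e he (C.s D e he y)) hiota :=
        C.comp_congr (I.inv_comp_cancel D e he x) (I.inv_comp_cancel D e he y) h2 hiota
    _ = C.iota D e he (C.comp (D.erase e) d (Finset.mem_erase_of_ne_of_mem (Ne.symm hed) hd)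
          (C.s D e he x) (C.s D e he y) (C.s_ne_composable hd he hed h)) :=
        (C.iota_comp D e d he _ hd _ _ _ hiota).symm
    _ = C.iota D e he (C.s D e he (C.comp D d hd x y h)) := by
        rw [C.s_comp_of_ne hd he hed]

theorem inv_iota_ne (D : Finset ℕ) (d e : ℕ) (hd : d ∈ D) (he : e ∈ D) (hed : e ≠ d)
    (he' : e ∈ D.erase d) (x : C.Q (D.erase d)) :
    I.inv D e he (C.iota D d hd x) = C.iota D d hd (I.inv (D.erase d) e he' x) := by
  have h1 : C.s D e he (C.iota D d hd (I.inv (D.erase d) e he' x))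
      = C.t D e he (C.iota D d hd x) := by
    rw [C.s_iota_ne D d e hd he hed, C.t_iota_ne D d e hd he hed, I.s_inv]
  refine (I.eq_inv_of_comp_eq_iota h1 ?_).symm
  calc C.comp D e he (C.iota D d hd (I.inv (D.erase d) e he' x)) (C.iota D d hd x) h1
      = C.iota D d hd (C.comp (D.erase d) e he' (I.inv (D.erase d) e he' x) x
          (I.s_inv (D.erase d) e he' x)) :=
        (C.iota_comp D d e hd he' he _ _ _ h1).symm
    _ = C.iota D d hd (C.iota (D.erase d) e he' (C.s (D.erase d) e he' x)) := by
        rw [I.inv_comp_cancel]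
    _ = C.iota D e he (C.s D e he (C.iota D d hd x)) := by
        rw [C.iota_iota_comm hd he hed, C.s_iota_ne D d e hd he hed]

theorem inv_inv_comm (D : Finset ℕ) (e f : ℕ) (he : e ∈ D) (hf : f ∈ D) (hef : e ≠ f)
    (x : C.Q D) : I.inv D f hf (I.inv D e he x) = I.inv D e he (I.inv D f hf x) := by
  have h1 : C.s D f hf (I.inv D e he (I.inv D f hf x)) = C.t D f hf (I.inv D e he x) := by
    rw [I.s_inv_ne D e f he hf (Ne.symm hef), I.s_inv, I.t_inv_ne D e f he hf (Ne.symm hef)]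
  refine (I.eq_inv_of_comp_eq_iota h1 ?_).symm
  calc C.comp D f hf (I.inv D e he (I.inv D f hf x)) (I.inv D e he x) h1
      = I.inv D e he (C.comp D f hf (I.inv D f hf x) x (I.s_inv D f hf x)) :=
        (I.inv_comp_ne D f e hf he hef _ x _ h1).symm
    _ = C.iota D f hf (I.inv (D.erase f) e (Finset.mem_erase_of_ne_of_mem hef he)
          (C.s D f hf x)) := by
        rw [I.inv_comp_cancel, I.inv_iota_ne D f e hf he hef]
    _ = C.iota D f hf (C.s D f hf (I.inv D e he x)) := by
        rw [I.s_inv_ne D e f he hf (Ne.symm hef)]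

end DirectionalInverses

/-- a strict cubical ω-category in which every cell has directional
inverses becomes a strict involutive cubical ω-category by taking the self-duality
in direction `d` to be the directional inverse in direction `d`: all the structural
and algebraic axioms on the involutions hold (structural source/target conditions,
involutivity, commutativity of distinct-direction involutions, functoriality of
involutions, and Hermitianity of identities). -/
theorem groupoid_inverses_give_involutive_structure (C : StrictCat)
    (inv : ∀ (D : Finset ℕ) (d : ℕ), d ∈ D → C.Q D → C.Q D)
    (hs : ∀ (D : Finset ℕ) (d : ℕ) (hd : d ∈ D) (x : C.Q D),
      C.s D d hd (inv D d hd x) = C.t D d hd x)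
    (ht : ∀ (D : Finset ℕ) (d : ℕ) (hd : d ∈ D) (x : C.Q D),
      C.t D d hd (inv D d hd x) = C.s D d hd x)
    (hinv_r : ∀ (D : Finset ℕ) (d : ℕ) (hd : d ∈ D) (x : C.Q D),
      C.comp D d hd x (inv D d hd x) (ht D d hd x).symm
        = C.iota D d hd (C.t D d hd x))
    (hinv_l : ∀ (D : Finset ℕ) (d : ℕ) (hd : d ∈ D) (x : C.Q D),
      C.comp D d hd (inv D d hd x) x (hs D d hd x)
        = C.iota D d hd (C.s D d hd x)) :
    -- structural axioms in the transverse directions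
    (∀ (D : Finset ℕ) (d e : ℕ) (hd : d ∈ D) (he : e ∈ D) (hed : e ≠ d) (x : C.Q D),
      C.s D e he (inv D d hd x)
        = inv (D.erase e) d (Finset.mem_erase_of_ne_of_mem (Ne.symm hed) hd)
            (C.s D e he x)) ∧
    (∀ (D : Finset ℕ) (d e : ℕ) (hd : d ∈ D) (he : e ∈ D) (hed : e ≠ d) (x : C.Q D),
      C.t D e he (inv D d hd x)
        = inv (D.erase e) d (Finset.mem_erase_of_ne_of_mem (Ne.symm hed) hd)
            (C.t D e he x)) ∧
    -- involutivity
    (∀ (D : Finset ℕ) (d : ℕ) (hd : d ∈ D) (x : C.Q D),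
      inv D d hd (inv D d hd x) = x) ∧
    -- commutativity of involutions in distinct directions
    (∀ (D : Finset ℕ) (e f : ℕ) (he : e ∈ D) (hf : f ∈ D), e ≠ f →
      ∀ x : C.Q D, inv D f hf (inv D e he x) = inv D e he (inv D f hf x)) ∧
    -- functoriality of involutions, same direction (anti-homomorphism)
    (∀ (D : Finset ℕ) (d : ℕ) (hd : d ∈ D) (x y : C.Q D)
        (h : C.s D d hd x = C.t D d hd y)
        (h' : C.s D d hd (inv D d hd y) = C.t D d hd (inv D d hd x)),
      inv D d hd (C.comp D d hd x y h)
        = C.comp D d hd (inv D d hd y) (inv D d hd x) h') ∧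
    -- functoriality of involutions, distinct directions (homomorphism)
    (∀ (D : Finset ℕ) (d e : ℕ) (hd : d ∈ D) (he : e ∈ D), e ≠ d →
      ∀ (x y : C.Q D) (h : C.s D d hd x = C.t D d hd y)
        (h' : C.s D d hd (inv D e he x) = C.t D d hd (inv D e he y)),
      inv D e he (C.comp D d hd x y h)
        = C.comp D d hd (inv D e he x) (inv D e he y) h') ∧
    -- Hermitianity of identities, same direction
    (∀ (D : Finset ℕ) (d : ℕ) (hd : d ∈ D) (x : C.Q (D.erase d)),
      inv D d hd (C.iota D d hd x) = C.iota D d hd x) ∧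
    -- Hermitianity of identities, distinct directions
    (∀ (D : Finset ℕ) (d e : ℕ) (hd : d ∈ D) (he : e ∈ D), e ≠ d →
      ∀ (he' : e ∈ D.erase d) (x : C.Q (D.erase d)),
      inv D e he (C.iota D d hd x) = C.iota D d hd (inv (D.erase d) e he' x)) := by
  let I : DirectionalInverses C := ⟨inv, hs, ht, hinv_r, hinv_l⟩
  exact ⟨I.s_inv_ne, I.t_inv_ne, I.inv_inv, I.inv_inv_comm, I.inv_comp_rev, I.inv_comp_ne,
    I.inv_iota, I.inv_iota_ne⟩

end Cub
end
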